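/- arXiv:1003.5710 — 2 statements merged into one kernel-verified Lean document; each statement's English description precedes it below -/
import Mathlib

section
/- Let E and F be Banach spaces, α an ordinal, and let S, T : E → F be bounded linear operators with Sz(S) ≤ ω^α and Sz(T) ≤ ω^α. Then Sz(S + T) ≤ ω^α. -/
open NormedSpace Metric
open scoped Ordinal Pointwise

noncomputable section

/-- A subset of the norm dual is weak-* open if it is open when transported to the weak-* dual. -/
def IsWeakStarOpen {E : Type*} [NormedAddCommGroup E] [NormedSpace ℝ E]
    (V : Set (StrongDual ℝ E)) : Prop :=
  IsOpen (StrongDual.toWeakDual '' V : Set (WeakDual ℝ E))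

/-- A subset of the norm dual is weak-* compact if it is compact when transported to the
weak-* dual. -/
def IsWeakStarCompact {E : Type*} [NormedAddCommGroup E] [NormedSpace ℝ E]
    (K : Set (StrongDual ℝ E)) : Prop :=
  IsCompact (StrongDual.toWeakDual '' K : Set (WeakDual ℝ E))

/-- The Szlenk derivation `s_ε(K)`. -/
def szlenkDeriv {E : Type*} [NormedAddCommGroup E] [NormedSpace ℝ E]
    (ε : ℝ) (K : Set (StrongDual ℝ E)) : Set (StrongDual ℝ E) :=
  {x | x ∈ K ∧ ∀ V : Set (StrongDual ℝ E), IsWeakStarOpen V → x ∈ V → ε < Metric.diam (K ∩ V)}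

/-- The transfinite iterates `s_ε^α(K)` of the Szlenk derivation. -/
noncomputable def szlenkIter {E : Type*} [NormedAddCommGroup E] [NormedSpace ℝ E]
    (ε : ℝ) (K : Set (StrongDual ℝ E)) (α : Ordinal) : Set (StrongDual ℝ E) :=
  Ordinal.limitRecOn α K (fun _ S => szlenkDeriv ε S)
    (fun o _ ih => ⋂ (β : Ordinal) (h : β < o), ih β h)

/-- `Sz(K) ≤ γ` : the `γ`-th Szlenk derivative of `K` is empty for every `ε > 0`. -/
def SzLE {E : Type*} [NormedAddCommGroup E] [NormedSpace ℝ E]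
    (K : Set (StrongDual ℝ E)) (γ : Ordinal) : Prop :=
  ∀ ε : ℝ, 0 < ε → szlenkIter ε K γ = ∅

/-- The image of a set under the adjoint of an operator. -/
def adjImage {E F : Type*} [NormedAddCommGroup E] [NormedSpace ℝ E]
    [NormedAddCommGroup F] [NormedSpace ℝ F] (T : E →L[ℝ] F) (K : Set (StrongDual ℝ F)) :
    Set (StrongDual ℝ E) :=
  (fun g : StrongDual ℝ F => g.comp T) '' K

/-- `Sz(T) ≤ γ` for an operator `T`. -/
def SzOpLE {E F : Type*} [NormedAddCommGroup E] [NormedSpace ℝ E]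
    [NormedAddCommGroup F] [NormedSpace ℝ F] (T : E →L[ℝ] F) (γ : Ordinal) : Prop :=
  SzLE (adjImage T (closedBall (0 : StrongDual ℝ F) 1)) γ

/-- `Sz(E) ≤ γ` for a Banach space `E`. -/
def SzSpaceLE (E : Type*) [NormedAddCommGroup E] [NormedSpace ℝ E] (γ : Ordinal) : Prop :=
  SzLE (closedBall (0 : StrongDual ℝ E) 1) γ


open Ordinal Order Set

namespace Ordinal
universe u

noncomputable def nadd : Ordinal.{u} → Ordinal.{u} → Ordinal.{u}
  | a, b =>
    max (blsub.{u, u} a fun a' _ => nadd a' b) (blsub.{u, u} b fun b' _ => nadd a b')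
termination_by a b => (a, b)

infixl:65 " ♯ " => nadd

theorem nadd_def (a b : Ordinal.{u}) :
    a ♯ b = max (blsub.{u, u} a fun a' _ => a' ♯ b) (blsub.{u, u} b fun b' _ => a ♯ b') := by
  rw [nadd]

theorem lt_nadd_iff {a b c : Ordinal.{u}} :
    a < b ♯ c ↔ (∃ b' < b, a ≤ b' ♯ c) ∨ ∃ c' < c, a ≤ b ♯ c' := by
  rw [nadd_def]
  simp [lt_blsub_iff]

theorem nadd_le_iff {a b c : Ordinal.{u}} :
    b ♯ c ≤ a ↔ (∀ b' < b, b' ♯ c < a) ∧ ∀ c' < c, b ♯ c' < a := by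
  rw [nadd_def]
  simp [blsub_le_iff]

theorem nadd_lt_nadd_left {b c : Ordinal.{u}} (h : b < c) (a : Ordinal.{u}) : a ♯ b < a ♯ c :=
  lt_nadd_iff.2 (Or.inr ⟨b, h, le_rfl⟩)

theorem nadd_lt_nadd_right {b c : Ordinal.{u}} (h : b < c) (a : Ordinal.{u}) : b ♯ a < c ♯ a :=
  lt_nadd_iff.2 (Or.inl ⟨b, h, le_rfl⟩)

theorem nadd_le_nadd {a b c d : Ordinal.{u}} (h₁ : a ≤ b) (h₂ : c ≤ d) : a ♯ c ≤ b ♯ d := by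
  have h1 : a ♯ c ≤ b ♯ c := by
    rcases lt_or_eq_of_le h₁ with h | rfl
    · exact (nadd_lt_nadd_right h c).le
    · exact le_rfl
  have h2 : b ♯ c ≤ b ♯ d := by
    rcases lt_or_eq_of_le h₂ with h | rfl
    · exact (nadd_lt_nadd_left h b).le
    · exact le_rfl
  exact h1.trans h2

theorem nadd_lt_nadd_of_lt_of_le {a b c d : Ordinal.{u}} (h₁ : a < b) (h₂ : c ≤ d) :
    a ♯ c < b ♯ d :=
  (nadd_lt_nadd_right h₁ c).trans_le (nadd_le_nadd le_rfl h₂)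

theorem nadd_lt_nadd_of_le_of_lt {a b c d : Ordinal.{u}} (h₁ : a ≤ b) (h₂ : c < d) :
    a ♯ c < b ♯ d :=
  (nadd_lt_nadd_left h₂ a).trans_le (nadd_le_nadd h₁ le_rfl)

theorem nadd_comm (a b : Ordinal.{u}) : a ♯ b = b ♯ a := by
  rw [nadd_def, nadd_def, max_comm]
  congr <;> ext <;> apply nadd_comm
termination_by (a, b)

@[simp] theorem nadd_zero (a : Ordinal.{u}) : a ♯ 0 = a := by
  induction a using Ordinal.induction with
  | h a IH =>
    apply le_antisymm
    · rw [nadd_le_iff]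
      refine ⟨fun a' ha' => by rw [IH a' ha']; exact ha', fun c' hc' => absurd hc' (by simp)⟩
    · by_contra h
      have h' := not_le.mp h
      have := nadd_lt_nadd_right h' 0
      rw [IH _ h'] at this
      exact lt_irrefl _ this

@[simp] theorem zero_nadd (a : Ordinal.{u}) : 0 ♯ a = a := by
  rw [nadd_comm, nadd_zero]

theorem succ_nadd (a b : Ordinal.{u}) : succ a ♯ b = succ (a ♯ b) := by
  induction b using Ordinal.induction with
  | h b IH =>
    apply le_antisymm
    · rw [nadd_le_iff]
      refine ⟨fun a' ha' => lt_succ_iff.mpr (nadd_le_nadd (lt_succ_iff.mp ha') le_rfl),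
        fun c' hc' => ?_⟩
      rw [IH c' hc']
      exact succ_lt_succ_iff.mpr (nadd_lt_nadd_left hc' a)
    · exact succ_le_of_lt (nadd_lt_nadd_right (lt_succ a) b)

theorem nadd_succ (a b : Ordinal.{u}) : a ♯ succ b = succ (a ♯ b) := by
  rw [nadd_comm, succ_nadd, nadd_comm]

end Ordinal

namespace SzAux
universe u

/-- Natural sum splitting: any ordinal below `a ♯ b` is `a' ♯ b'` with `a' ≤ a`, `b' ≤ b`. -/
theorem nadd_split : ∀ (v : Ordinal), ∀ a b ζ : Ordinal, a ♯ b = v → ζ ≤ a ♯ b →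
    ∃ a' ≤ a, ∃ b' ≤ b, a' ♯ b' = ζ := by
  intro v
  induction v using Ordinal.induction with
  | h v IH =>
    intro a b ζ hv hζ
    rcases eq_or_lt_of_le hζ with h | h
    · exact ⟨a, le_rfl, b, le_rfl, h.symm⟩
    · rcases Ordinal.lt_nadd_iff.mp h with ⟨a', ha', hle⟩ | ⟨b', hb', hle⟩
      · obtain ⟨a'', h1, b'', h2, h3⟩ :=
          IH (a' ♯ b) (hv ▸ Ordinal.nadd_lt_nadd_right ha' b) a' b ζ rfl hle
        exact ⟨a'', h1.trans ha'.le, b'', h2, h3⟩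
      · obtain ⟨a'', h1, b'', h2, h3⟩ :=
          IH (a ♯ b') (hv ▸ Ordinal.nadd_lt_nadd_left hb' a) a b' ζ rfl hle
        exact ⟨a'', h1, b'', h2.trans hb'.le, h3⟩

theorem nadd_split' {a b ζ : Ordinal} (hζ : ζ ≤ a ♯ b) :
    ∃ a' ≤ a, ∃ b' ≤ b, a' ♯ b' = ζ :=
  nadd_split (a ♯ b) a b ζ rfl hζ

/-- Key bounding lemma for closure of `ω ^ h` under natural addition. -/
theorem nadd_aux (γ : Ordinal) (Hγ : ∀ x y, x < ω ^ γ → y < ω ^ γ → x ♯ y < ω ^ γ) :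
    ∀ (N : ℕ) (v : Ordinal) (m n : ℕ) (a₁ b₁ : Ordinal), m + n ≤ N → a₁ ♯ b₁ ≤ v →
      a₁ < ω ^ γ → b₁ < ω ^ γ →
      (ω ^ γ * m + a₁) ♯ (ω ^ γ * n + b₁) ≤ ω ^ γ * (↑(m + n)) + (a₁ ♯ b₁) := by
  intro N
  induction N using Nat.strong_induction_on with
  | _ N IHN =>
    intro v
    induction v using Ordinal.induction with
    | h v IHv =>
      intro m n a₁ b₁ hmn hv ha hb
      have hW : (0:Ordinal) < ω ^ γ := opow_pos γ omega0_pos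
      -- a one-sided estimate, applied twice by symmetry
      have side : ∀ (m n : ℕ) (a₁ b₁ : Ordinal), m + n ≤ N → a₁ ♯ b₁ ≤ v →
          a₁ < ω ^ γ → b₁ < ω ^ γ →
          ∀ u < ω ^ γ * (m : Ordinal) + a₁,
            u ♯ (ω ^ γ * n + b₁) < ω ^ γ * (↑(m + n)) + (a₁ ♯ b₁) := by
        intro m n a₁ b₁ hmn hv ha hb u hu
        have hdm : ω ^ γ * (u / ω ^ γ) + u % ω ^ γ = u := Ordinal.div_add_mod u _
        have hmod : u % ω ^ γ < ω ^ γ := Ordinal.mod_lt u hW.ne'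
        have hdivlt : u / ω ^ γ < ((m + 1 : ℕ) : Ordinal) := by
          rw [Ordinal.div_lt hW.ne']
          push_cast
          calc u < ω ^ γ * m + a₁ := hu
            _ ≤ ω ^ γ * m + ω ^ γ := add_le_add_right ha.le _
            _ = ω ^ γ * ((m : Ordinal) + 1) := by rw [mul_add_one]
        obtain ⟨k, hk⟩ := Ordinal.lt_omega0.mp (hdivlt.trans (Ordinal.nat_lt_omega0 _))
        have hkm : k < m + 1 := by exact_mod_cast hk ▸ hdivlt
        rcases Nat.lt_succ_iff_lt_or_eq.mp hkm with hklt | hkeq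
        · -- u = ω^γ * k + u₁ with k < m
          have h1 : u ♯ (ω ^ γ * n + b₁) ≤ ω ^ γ * (↑(k + n)) + (u % ω ^ γ ♯ b₁) := by
            have := IHN (k + n) (by omega) (u % ω ^ γ ♯ b₁) k n (u % ω ^ γ) b₁
              le_rfl le_rfl hmod hb
            rw [hk] at hdm
            rw [hdm] at this
            exact this
          have h2 : (u % ω ^ γ ♯ b₁) < ω ^ γ := Hγ _ _ hmod hb
          calc u ♯ (ω ^ γ * n + b₁) ≤ ω ^ γ * (↑(k + n)) + (u % ω ^ γ ♯ b₁) := h1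
            _ < ω ^ γ * (↑(k + n)) + ω ^ γ := add_lt_add_right h2 _
            _ = ω ^ γ * (↑(k + n + 1)) := by push_cast; rw [mul_add_one]
            _ ≤ ω ^ γ * (↑(m + n)) := by
                apply mul_le_mul_right
                exact Nat.cast_le.mpr (by omega)
            _ ≤ ω ^ γ * (↑(m + n)) + (a₁ ♯ b₁) := le_self_add
        · -- u = ω^γ * m + u₁ with u₁ < a₁
          subst hkeq
          have hu₁ : u % ω ^ γ < a₁ := by
            rw [hk] at hdm
            rw [← hdm] at hu
            exact lt_of_add_lt_add_left hu
          have hval : (u % ω ^ γ ♯ b₁) < a₁ ♯ b₁ := Ordinal.nadd_lt_nadd_right hu₁ b₁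
          have h1 : u ♯ (ω ^ γ * n + b₁) ≤ ω ^ γ * (↑(k + n)) + (u % ω ^ γ ♯ b₁) := by
            have := IHv (u % ω ^ γ ♯ b₁) (hval.trans_le hv) k n (u % ω ^ γ) b₁
              hmn le_rfl (hu₁.trans ha) hb
            rw [hk] at hdm
            rw [hdm] at this
            exact this
          calc u ♯ (ω ^ γ * n + b₁) ≤ ω ^ γ * (↑(k + n)) + (u % ω ^ γ ♯ b₁) := h1
            _ < ω ^ γ * (↑(k + n)) + (a₁ ♯ b₁) := add_lt_add_right hval _
      rw [Ordinal.nadd_le_iff]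
      constructor
      · intro u hu
        exact side m n a₁ b₁ hmn hv ha hb u hu
      · intro u hu
        have := side n m b₁ a₁ (by omega) ((Ordinal.nadd_comm b₁ a₁).le.trans hv) hb ha u hu
        rw [Ordinal.nadd_comm (ω ^ γ * (m:Ordinal) + a₁)]
        calc u ♯ (ω ^ γ * m + a₁) < ω ^ γ * (↑(n + m)) + (b₁ ♯ a₁) := this
          _ = ω ^ γ * (↑(m + n)) + (a₁ ♯ b₁) := by
              rw [Ordinal.nadd_comm b₁ a₁, Nat.add_comm n m]

/-- `ω ^ h` is closed under natural addition. -/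
theorem nadd_lt_omega0_opow {h a b : Ordinal} (ha : a < ω ^ h) (hb : b < ω ^ h) :
    a ♯ b < ω ^ h := by
  induction h using Ordinal.induction generalizing a b with
  | h h IH =>
    rcases eq_or_ne a 0 with rfl | ha0
    · simpa using hb
    rcases eq_or_ne b 0 with rfl | hb0
    · simpa using ha
    set γ := max (log ω a) (log ω b) with hγdef
    have hγh : γ < h := by
      rcases max_cases (log ω a) (log ω b) with ⟨he, _⟩ | ⟨he, _⟩ <;> rw [hγdef, he]
      · exact (Ordinal.lt_opow_iff_log_lt one_lt_omega0 ha0).mp ha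
      · exact (Ordinal.lt_opow_iff_log_lt one_lt_omega0 hb0).mp hb
    have hW : (0:Ordinal) < ω ^ γ := opow_pos γ omega0_pos
    have hsucc : (ω:Ordinal) ^ succ γ = ω ^ γ * ω := opow_succ ω γ
    have haγ : a < ω ^ γ * ω := by
      rw [← hsucc]
      exact (Ordinal.lt_opow_succ_log_self one_lt_omega0 a).trans_le
        (Ordinal.opow_le_opow_right omega0_pos (succ_le_succ (le_max_left _ _)))
    have hbγ : b < ω ^ γ * ω := by
      rw [← hsucc]
      exact (Ordinal.lt_opow_succ_log_self one_lt_omega0 b).trans_le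
        (Ordinal.opow_le_opow_right omega0_pos (succ_le_succ (le_max_right _ _)))
    obtain ⟨m, hm⟩ := Ordinal.lt_omega0.mp ((Ordinal.div_lt hW.ne').mpr haγ)
    obtain ⟨n, hn⟩ := Ordinal.lt_omega0.mp ((Ordinal.div_lt hW.ne').mpr hbγ)
    have hda : ω ^ γ * m + a % ω ^ γ = a := by rw [← hm]; exact Ordinal.div_add_mod a _
    have hdb : ω ^ γ * n + b % ω ^ γ = b := by rw [← hn]; exact Ordinal.div_add_mod b _
    have hma : a % ω ^ γ < ω ^ γ := Ordinal.mod_lt a hW.ne'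
    have hmb : b % ω ^ γ < ω ^ γ := Ordinal.mod_lt b hW.ne'
    have key := nadd_aux γ (fun x y hx hy => IH γ hγh hx hy) (m + n)
      (a % ω ^ γ ♯ b % ω ^ γ) m n (a % ω ^ γ) (b % ω ^ γ) le_rfl le_rfl hma hmb
    rw [hda, hdb] at key
    have : a ♯ b < ω ^ γ * (↑(m + n)) + ω ^ γ :=
      key.trans_lt (add_lt_add_right (IH γ hγh hma hmb) _)
    have h2 : ω ^ γ * (↑(m + n)) + ω ^ γ = ω ^ γ * (↑(m + n + 1)) := by
      push_cast; rw [mul_add_one]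
    rw [h2] at this
    refine this.trans_le ?_
    calc ω ^ γ * (↑(m + n + 1)) ≤ ω ^ γ * ω :=
          mul_le_mul_right (Ordinal.nat_lt_omega0 _).le _
      _ = ω ^ succ γ := hsucc.symm
      _ ≤ ω ^ h := Ordinal.opow_le_opow_right omega0_pos (succ_le_of_lt hγh)

/-- Antichains in `Ordinal × Ordinal` (product order) are finite. -/
theorem antichain_finite {s : Set (Ordinal.{u} × Ordinal.{u})} (h : IsAntichain (· ≤ ·) s) :
    s.Finite := by
  have h1 : (Set.univ : Set Ordinal).IsPWO := (Set.isWF_univ_iff.mpr inferInstance).isPWO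
  have hsub : s ⊆ (Set.univ ×ˢ Set.univ : Set (Ordinal.{u} × Ordinal.{u})) := fun p _ => ⟨trivial, trivial⟩
  have hs : s.IsPWO := (h1.prod h1).mono hsub
  exact h.finite_of_partiallyWellOrderedOn hs

/-- Every element of a set in `Ordinal × Ordinal` lies above a minimal element. -/
theorem exists_minimal_le {U : Set (Ordinal.{u} × Ordinal.{u})} {p : Ordinal.{u} × Ordinal.{u}} (hp : p ∈ U) :
    ∃ q ∈ U, q ≤ p ∧ ∀ r ∈ U, r ≤ q → r = q := by
  have hwf : (U ∩ {q | q ≤ p}).IsWF := by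
    have h1 : (Set.univ : Set Ordinal).IsPWO := (Set.isWF_univ_iff.mpr inferInstance).isPWO
    have hsub : (U ∩ {q | q ≤ p}) ⊆ (Set.univ ×ˢ Set.univ : Set (Ordinal.{u} × Ordinal.{u})) :=
      fun q _ => ⟨trivial, trivial⟩
    have hs : (U ∩ {q | q ≤ p}).IsPWO := (h1.prod h1).mono hsub
    exact hs.isWF
  have hne : (U ∩ {q | q ≤ p}).Nonempty := ⟨p, hp, show p ≤ p from le_rfl⟩
  refine ⟨hwf.min hne, (hwf.min_mem hne).1, (hwf.min_mem hne).2, ?_⟩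
  intro r hr hrle
  by_contra hne'
  exact hwf.not_lt_min hne ⟨hr, hrle.trans (hwf.min_mem hne).2⟩ (lt_of_le_of_ne hrle hne')

end SzAux

/-! ### Weak-star transfer infrastructure -/

open NormedSpace Metric Bornology
open scoped Pointwise

section Topo
variable {E : Type*} [NormedAddCommGroup E] [NormedSpace ℝ E]

/-- Preimage in the weak dual. -/
def preW (K : Set (StrongDual ℝ E)) : Set (WeakDual ℝ E) :=
  ⇑WeakDual.toStrongDual ⁻¹' K

theorem mem_preW {K : Set (StrongDual ℝ E)} {x : WeakDual ℝ E} :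
    x ∈ preW K ↔ WeakDual.toStrongDual x ∈ K := Iff.rfl

theorem preW_mono {K L : Set (StrongDual ℝ E)} (h : K ⊆ L) : preW K ⊆ preW L :=
  fun _ hx => h hx

@[simp] theorem mem_preW_toWeakDual {K : Set (StrongDual ℝ E)} {x : StrongDual ℝ E} :
    StrongDual.toWeakDual x ∈ preW K ↔ x ∈ K := by
  simp [mem_preW]

theorem preW_inter (K L : Set (StrongDual ℝ E)) : preW (K ∩ L) = preW K ∩ preW L := rfl

theorem preW_compl (K : Set (StrongDual ℝ E)) : preW Kᶜ = (preW K)ᶜ := rfl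

theorem preW_empty_iff {K : Set (StrongDual ℝ E)} : preW K = ∅ ↔ K = ∅ := by
  constructor
  · intro h
    ext x
    simp only [Set.mem_empty_iff_false, iff_false]
    intro hx
    have : StrongDual.toWeakDual x ∈ preW K := by simpa using hx
    simp [h] at this
  · rintro rfl; rfl

theorem preW_add (K L : Set (StrongDual ℝ E)) : preW (K + L) = preW K + preW L := by
  ext x
  simp only [mem_preW, Set.mem_add]
  constructor
  · rintro ⟨a, ha, b, hb, hab⟩
    refine ⟨StrongDual.toWeakDual a, by simpa using ha, StrongDual.toWeakDual b, by simpa using hb, ?_⟩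
    apply (WeakDual.toStrongDual : WeakDual ℝ E ≃ₗ[ℝ] StrongDual ℝ E).injective
    simp [map_add, hab]
  · rintro ⟨a, ha, b, hb, rfl⟩
    exact ⟨_, ha, _, hb, (map_add _ a b).symm⟩

theorem image_toWeakDual (V : Set (StrongDual ℝ E)) :
    StrongDual.toWeakDual '' V = preW V := by
  ext x
  constructor
  · rintro ⟨y, hy, rfl⟩; simpa using hy
  · intro h; exact ⟨WeakDual.toStrongDual x, h, by simp⟩

theorem isWeakStarOpen_iff {V : Set (StrongDual ℝ E)} :
    IsWeakStarOpen V ↔ IsOpen (preW V) := by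
  rw [IsWeakStarOpen, image_toWeakDual]

theorem isWeakStarCompact_iff {K : Set (StrongDual ℝ E)} :
    IsWeakStarCompact K ↔ IsCompact (preW K) := by
  rw [IsWeakStarCompact, image_toWeakDual]

/-- Transport a weak-dual set back to the dual. -/
def ofW (U : Set (WeakDual ℝ E)) : Set (StrongDual ℝ E) :=
  ⇑StrongDual.toWeakDual ⁻¹' U

@[simp] theorem preW_ofW (U : Set (WeakDual ℝ E)) : preW (ofW U) = U := by
  ext x
  simp [preW, ofW, mem_preW]

theorem mem_ofW {U : Set (WeakDual ℝ E)} {x : StrongDual ℝ E} :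
    x ∈ ofW U ↔ StrongDual.toWeakDual x ∈ U := Iff.rfl

theorem isWeakStarOpen_ofW {U : Set (WeakDual ℝ E)} (hU : IsOpen U) :
    IsWeakStarOpen (ofW U) := by
  rw [isWeakStarOpen_iff, preW_ofW]; exact hU

theorem inter_ofW_subset {K : Set (StrongDual ℝ E)} {U : Set (WeakDual ℝ E)} :
    preW (K ∩ ofW U) = preW K ∩ U := by rw [preW_inter, preW_ofW]

end Topo


/-! ### Basic properties of the Szlenk derivation and its iterates -/

section Basic
variable {E : Type*} [NormedAddCommGroup E] [NormedSpace ℝ E]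

theorem szlenkDeriv_subset (ε : ℝ) (K : Set (StrongDual ℝ E)) : szlenkDeriv ε K ⊆ K :=
  fun _ hx => hx.1

theorem szlenkDeriv_mono {K L : Set (StrongDual ℝ E)} (hKL : K ⊆ L) (hL : IsBounded L) (ε : ℝ) :
    szlenkDeriv ε K ⊆ szlenkDeriv ε L := by
  rintro x ⟨hxK, hx⟩
  refine ⟨hKL hxK, fun V hV hxV => ?_⟩
  exact (hx V hV hxV).trans_le
    (Metric.diam_mono (Set.inter_subset_inter_left V hKL) (hL.subset Set.inter_subset_left))

@[simp] theorem szlenkIter_zero (ε : ℝ) (K : Set (StrongDual ℝ E)) : szlenkIter ε K 0 = K :=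
  Ordinal.limitRecOn_zero _ _ _

@[simp] theorem szlenkIter_succ (ε : ℝ) (K : Set (StrongDual ℝ E)) (o : Ordinal) :
    szlenkIter ε K (Order.succ o) = szlenkDeriv ε (szlenkIter ε K o) :=
  Ordinal.limitRecOn_succ _ _ _ _

theorem szlenkIter_limit (ε : ℝ) (K : Set (StrongDual ℝ E)) {o : Ordinal} (ho : Order.IsSuccLimit o) :
    szlenkIter ε K o = ⋂ (β : Ordinal) (_ : β < o), szlenkIter ε K β :=
  Ordinal.limitRecOn_limit _ _ _ _ ho

theorem szlenkIter_subset (ε : ℝ) (K : Set (StrongDual ℝ E)) (o : Ordinal) :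
    szlenkIter ε K o ⊆ K := by
  induction o using Ordinal.limitRecOn with
  | zero => simp
  | add_one o IH =>
    rw [Ordinal.add_one_eq_succ]
    rw [szlenkIter_succ]
    exact (szlenkDeriv_subset _ _).trans IH
  | limit o ho IH =>
    rw [szlenkIter_limit ε K ho]
    intro x hx
    have h0 : (0:Ordinal) < o := ho.pos
    have := Set.mem_iInter.mp hx 0
    have := Set.mem_iInter.mp this h0
    simpa using this

theorem szlenkIter_anti (ε : ℝ) (K : Set (StrongDual ℝ E)) :
    ∀ {a b : Ordinal}, a ≤ b → szlenkIter ε K b ⊆ szlenkIter ε K a := by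
  intro a b
  induction b using Ordinal.limitRecOn generalizing a with
  | zero =>
    intro ha
    rw [nonpos_iff_eq_zero.mp ha]
  | add_one o IH =>
    rw [Ordinal.add_one_eq_succ]
    intro ha
    rcases Order.le_succ_iff_eq_or_le.mp ha with rfl | ha'
    · exact le_rfl
    · rw [szlenkIter_succ]
      exact (szlenkDeriv_subset _ _).trans (IH ha')
  | limit o ho IH =>
    intro ha
    rcases eq_or_lt_of_le ha with rfl | ha'
    · exact le_rfl
    · rw [szlenkIter_limit ε K ho]
      intro x hx
      have := Set.mem_iInter.mp hx a
      exact Set.mem_iInter.mp this ha'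

theorem szlenkIter_mono {K L : Set (StrongDual ℝ E)} (hKL : K ⊆ L) (hL : IsBounded L) (ε : ℝ)
    (o : Ordinal) : szlenkIter ε K o ⊆ szlenkIter ε L o := by
  induction o using Ordinal.limitRecOn with
  | zero => simpa using hKL
  | add_one o IH =>
    rw [Ordinal.add_one_eq_succ]
    rw [szlenkIter_succ, szlenkIter_succ]
    exact (szlenkDeriv_mono IH (hL.subset (szlenkIter_subset ε L o)) ε)
  | limit o ho IH =>
    rw [szlenkIter_limit ε K ho, szlenkIter_limit ε L ho]
    exact fun x hx => Set.mem_iInter.mpr fun β => Set.mem_iInter.mpr fun hβ =>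
      IH β hβ (Set.mem_iInter.mp (Set.mem_iInter.mp hx β) hβ)

end Basic

/-! ### Compactness properties -/

section Compactness
variable {E : Type*} [NormedAddCommGroup E] [NormedSpace ℝ E]

@[simp] theorem toWeakDual_toNormedDual (x : WeakDual ℝ E) :
    StrongDual.toWeakDual (WeakDual.toStrongDual x) = x := rfl

@[simp] theorem toNormedDual_toWeakDual (x : StrongDual ℝ E) :
    WeakDual.toStrongDual (StrongDual.toWeakDual x) = x := rfl

@[simp] theorem ofW_preW (V : Set (StrongDual ℝ E)) : ofW (preW V) = V := rfl

theorem preW_nonempty_iff {K : Set (StrongDual ℝ E)} : (preW K).Nonempty ↔ K.Nonempty := by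
  constructor
  · rintro ⟨x, hx⟩; exact ⟨WeakDual.toStrongDual x, hx⟩
  · rintro ⟨x, hx⟩; exact ⟨StrongDual.toWeakDual x, by simpa using hx⟩

theorem wsCompact_szlenkDeriv {K : Set (StrongDual ℝ E)} (hK : IsWeakStarCompact K) (ε : ℝ) :
    IsWeakStarCompact (szlenkDeriv ε K) := by
  rw [isWeakStarCompact_iff] at hK ⊢
  set O : Set (WeakDual ℝ E) :=
    {y | ∃ U : Set (WeakDual ℝ E), IsOpen U ∧ y ∈ U ∧ Metric.diam (K ∩ ofW U) ≤ ε} with hO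
  have hOopen : IsOpen O := by
    rw [isOpen_iff_forall_mem_open]
    rintro y ⟨U, hU, hyU, hd⟩
    exact ⟨U, fun z hz => ⟨U, hU, hz, hd⟩, hU, hyU⟩
  have heq : preW (szlenkDeriv ε K) = preW K ∩ Oᶜ := by
    ext y
    constructor
    · rintro ⟨hyK, hy⟩
      refine ⟨hyK, fun hyO => ?_⟩
      obtain ⟨U, hU, hyU, hd⟩ := hyO
      have := hy (ofW U) (isWeakStarOpen_ofW hU) (by simpa [mem_ofW] using hyU)
      exact absurd hd (not_le.mpr this)
    · rintro ⟨hyK, hyO⟩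
      refine ⟨hyK, fun V hV hyV => ?_⟩
      by_contra hle
      exact hyO ⟨preW V, isWeakStarOpen_iff.mp hV, hyV, by simpa using not_lt.mp hle⟩
  rw [heq]
  exact hK.inter_right hOopen.isClosed_compl

theorem wsCompact_szlenkIter {K : Set (StrongDual ℝ E)} (hK : IsWeakStarCompact K) (ε : ℝ)
    (o : Ordinal) : IsWeakStarCompact (szlenkIter ε K o) := by
  induction o using Ordinal.limitRecOn with
  | zero => simpa using hK
  | add_one o IH => rw [Ordinal.add_one_eq_succ, szlenkIter_succ]; exact wsCompact_szlenkDeriv IH ε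
  | limit o ho IH =>
    rw [isWeakStarCompact_iff, szlenkIter_limit ε K ho]
    have heq : preW (⋂ (β : Ordinal) (_ : β < o), szlenkIter ε K β) =
        ⋂ (β : Ordinal) (_ : β < o), preW (szlenkIter ε K β) := by
      simp [preW, Set.preimage_iInter]
    rw [heq]
    refine IsCompact.of_isClosed_subset (isWeakStarCompact_iff.mp hK)
      (isClosed_biInter fun β hβ => (isWeakStarCompact_iff.mp (IH β hβ)).isClosed) ?_
    intro y hy
    have h0 := Set.mem_iInter.mp (Set.mem_iInter.mp hy 0) ho.pos
    rw [szlenkIter_zero] at h0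
    exact h0

theorem szlenkIter_nonempty_limit {K : Set (StrongDual ℝ E)} (hK : IsWeakStarCompact K) (ε : ℝ)
    {o : Ordinal} (ho : Order.IsSuccLimit o) (h : ∀ β < o, (szlenkIter ε K β).Nonempty) :
    (szlenkIter ε K o).Nonempty := by
  rw [← preW_nonempty_iff, szlenkIter_limit ε K ho]
  have heq : preW (⋂ (β : Ordinal) (_ : β < o), szlenkIter ε K β) =
      ⋂ (β : {β : Ordinal // β < o}), preW (szlenkIter ε K β.1) := by
    simp [preW, Set.preimage_iInter]
    rw [Set.iInter_subtype]
  rw [heq]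
  have hne : Nonempty {β : Ordinal // β < o} := ⟨⟨0, ho.pos⟩⟩
  apply IsCompact.nonempty_iInter_of_directed_nonempty_isCompact_isClosed
  · rintro ⟨i, hi⟩ ⟨j, hj⟩
    refine ⟨⟨max i j, max_lt hi hj⟩, ?_, ?_⟩
    · exact preW_mono (szlenkIter_anti ε K (le_max_left i j))
    · exact preW_mono (szlenkIter_anti ε K (le_max_right i j))
  · exact fun i => preW_nonempty_iff.mpr (h i.1 i.2)
  · exact fun i => isWeakStarCompact_iff.mp (wsCompact_szlenkIter hK ε i.1)
  · exact fun i => (isWeakStarCompact_iff.mp (wsCompact_szlenkIter hK ε i.1)).isClosed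

theorem wsCompact_add {A B : Set (StrongDual ℝ E)} (hA : IsWeakStarCompact A)
    (hB : IsWeakStarCompact B) : IsWeakStarCompact (A + B) := by
  rw [isWeakStarCompact_iff] at hA hB ⊢
  rw [preW_add]
  exact hA.add hB

/-- Separation of a point from a weak-star compact set. -/
theorem wsCompact_separation {Z : Set (StrongDual ℝ E)} (hZ : IsWeakStarCompact Z)
    {x : StrongDual ℝ E} (hx : x ∉ Z) :
    ∃ V, IsWeakStarOpen V ∧ x ∈ V ∧ V ∩ Z = ∅ := by
  refine ⟨ofW (preW Z)ᶜ, isWeakStarOpen_ofW (isWeakStarCompact_iff.mp hZ).isClosed.isOpen_compl,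
    by simpa [mem_ofW] using hx, ?_⟩
  ext y
  simp only [Set.mem_inter_iff, Set.mem_empty_iff_false, iff_false, not_and]
  intro hy
  simpa [mem_ofW] using hy

theorem isWeakStarOpen_biInter {ι : Type*} {s : Set ι} (hs : s.Finite)
    {f : ι → Set (StrongDual ℝ E)} (hf : ∀ i ∈ s, IsWeakStarOpen (f i)) :
    IsWeakStarOpen (⋂ i ∈ s, f i) := by
  rw [isWeakStarOpen_iff]
  have heq : preW (⋂ i ∈ s, f i) = ⋂ i ∈ s, preW (f i) := by
    simp [preW, Set.preimage_iInter]
  rw [heq]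
  exact hs.isOpen_biInter fun i hi => isWeakStarOpen_iff.mp (hf i hi)

theorem wsOpen_inter {U V : Set (StrongDual ℝ E)} (hU : IsWeakStarOpen U)
    (hV : IsWeakStarOpen V) : IsWeakStarOpen (U ∩ V) := by
  rw [isWeakStarOpen_iff] at *
  rw [preW_inter]
  exact hU.inter hV

/-- Compact intersections pass through sums: if `x ∈ C i + D` for all `i`, with `C` a directed
decreasing family of weak-star compact sets and `D` weak-star compact, then
`x ∈ (⋂ i, C i) + D`. -/
theorem mem_iInter_add {ι : Type*} [Nonempty ι] {C : ι → Set (StrongDual ℝ E)} {D : Set (StrongDual ℝ E)}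
    (hC : ∀ i, IsWeakStarCompact (C i)) (hD : IsWeakStarCompact D)
    (hdir : Directed (· ⊇ ·) C) {x : StrongDual ℝ E} (hx : ∀ i, x ∈ C i + D) :
    x ∈ (⋂ i, C i) + D := by
  set R : ι → Set (WeakDual ℝ E × WeakDual ℝ E) := fun i =>
    (preW (C i) ×ˢ preW D) ∩ {p | p.1 + p.2 = StrongDual.toWeakDual x} with hR
  have hclosed : IsClosed {p : WeakDual ℝ E × WeakDual ℝ E | p.1 + p.2 = StrongDual.toWeakDual x} :=
    isClosed_eq (continuous_fst.add continuous_snd) continuous_const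
  have hRc : ∀ i, IsCompact (R i) := fun i =>
    (((isWeakStarCompact_iff.mp (hC i)).prod (isWeakStarCompact_iff.mp hD))).inter_right hclosed
  have hRne : ∀ i, (R i).Nonempty := by
    intro i
    obtain ⟨a, ha, b, hb, hab⟩ := Set.mem_add.mp (hx i)
    refine ⟨(StrongDual.toWeakDual a, StrongDual.toWeakDual b), ⟨by simpa using ha, by simpa using hb⟩, ?_⟩
    show StrongDual.toWeakDual a + StrongDual.toWeakDual b = StrongDual.toWeakDual x
    rw [← map_add, hab]
  have hRdir : Directed (· ⊇ ·) R := by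
    intro i j
    obtain ⟨k, hki, hkj⟩ := hdir i j
    exact ⟨k, fun p hp => ⟨⟨preW_mono hki hp.1.1, hp.1.2⟩, hp.2⟩,
      fun p hp => ⟨⟨preW_mono hkj hp.1.1, hp.1.2⟩, hp.2⟩⟩
  obtain ⟨p, hp⟩ := IsCompact.nonempty_iInter_of_directed_nonempty_isCompact_isClosed R hRdir
    hRne hRc (fun i => (hRc i).isClosed)
  have hp' := Set.mem_iInter.mp hp
  have hsum : WeakDual.toStrongDual p.1 + WeakDual.toStrongDual p.2 = x := by
    have := (hp' (Classical.arbitrary ι)).2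
    have h2 := congrArg WeakDual.toStrongDual this
    simpa [map_add] using h2
  refine Set.mem_add.mpr ⟨WeakDual.toStrongDual p.1, ?_, WeakDual.toStrongDual p.2,
    (hp' (Classical.arbitrary ι)).1.2, hsum⟩
  exact Set.mem_iInter.mpr fun i => (hp' i).1.1

end Compactness

/-! ### The one-step lemma for sums -/

section OneStep
variable {E : Type*} [NormedAddCommGroup E] [NormedSpace ℝ E]

theorem onestep_add {A B : Set (StrongDual ℝ E)} (hA : IsWeakStarCompact A) (hB : IsWeakStarCompact B)
    (hAb : IsBounded A) (hBb : IsBounded B) {δ : ℝ} {x : StrongDual ℝ E}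
    (hx : x ∈ A + B) (hxA : x ∉ szlenkDeriv δ A + B) (hxB : x ∉ A + szlenkDeriv δ B) :
    ∃ V, IsWeakStarOpen V ∧ x ∈ V ∧ (A + B) ∩ V ⊆ closedBall x (2 * δ) := by
  classical
  set R : Set (WeakDual ℝ E × WeakDual ℝ E) :=
    (preW A ×ˢ preW B) ∩ {p | p.1 + p.2 = StrongDual.toWeakDual x} with hRdef
  have hclosed : IsClosed {p : WeakDual ℝ E × WeakDual ℝ E | p.1 + p.2 = StrongDual.toWeakDual x} :=
    isClosed_eq (continuous_fst.add continuous_snd) continuous_const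
  have hRc : IsCompact R :=
    ((isWeakStarCompact_iff.mp hA).prod (isWeakStarCompact_iff.mp hB)).inter_right hclosed
  have key : ∀ p ∈ R, ∃ U Vp : Set (WeakDual ℝ E), IsOpen U ∧ IsOpen Vp ∧
      p.1 ∈ U ∧ p.2 ∈ Vp ∧ Metric.diam (A ∩ ofW U) ≤ δ ∧ Metric.diam (B ∩ ofW Vp) ≤ δ := by
    rintro p ⟨⟨hpA, hpB⟩, hpx⟩
    have hsum : WeakDual.toStrongDual p.1 + WeakDual.toStrongDual p.2 = x := by
      have := congrArg WeakDual.toStrongDual hpx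
      simpa [map_add] using this
    have hnotA : WeakDual.toStrongDual p.1 ∉ szlenkDeriv δ A := by
      intro hmem
      exact hxA (hsum ▸ Set.add_mem_add hmem hpB)
    have hnotB : WeakDual.toStrongDual p.2 ∉ szlenkDeriv δ B := by
      intro hmem
      exact hxB (hsum ▸ Set.add_mem_add hpA hmem)
    simp only [szlenkDeriv, Set.mem_setOf_eq, not_and, not_forall] at hnotA hnotB
    obtain ⟨V₁, hV₁, hmem₁, hd₁⟩ := hnotA hpA
    obtain ⟨V₂, hV₂, hmem₂, hd₂⟩ := hnotB hpB
    exact ⟨preW V₁, preW V₂, isWeakStarOpen_iff.mp hV₁, isWeakStarOpen_iff.mp hV₂,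
      hmem₁, hmem₂, by simpa using not_lt.mp hd₁, by simpa using not_lt.mp hd₂⟩
  choose! U Vp hUopen hVopen hpU hpV hdU hdV using key
  have hcover : R ⊆ ⋃ p ∈ R, (U p ×ˢ Vp p) := by
    intro q hq
    exact Set.mem_biUnion hq (Set.mk_mem_prod (hpU q hq) (hpV q hq))
  obtain ⟨t, htR, htfin, hcov⟩ := hRc.elim_finite_subcover_image
    (fun p hp => (hUopen p hp).prod (hVopen p hp)) hcover
  set O : Set (WeakDual ℝ E × WeakDual ℝ E) := ⋃ p ∈ t, (U p ×ˢ Vp p) with hOdef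
  have hOopen : IsOpen O :=
    isOpen_biUnion fun p hp => (hUopen p (htR hp)).prod (hVopen p (htR hp))
  set Bad : Set (WeakDual ℝ E) :=
    (fun p : WeakDual ℝ E × WeakDual ℝ E => p.1 + p.2) '' ((preW A ×ˢ preW B) \ O) with hBadDef
  have hBadc : IsCompact Bad := by
    apply IsCompact.image _ (continuous_fst.add continuous_snd)
    rw [Set.diff_eq]
    exact ((isWeakStarCompact_iff.mp hA).prod (isWeakStarCompact_iff.mp hB)).inter_right
      hOopen.isClosed_compl
  have hxBad : StrongDual.toWeakDual x ∉ Bad := by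
    rintro ⟨p, ⟨hpAB, hpO⟩, hpx⟩
    exact hpO (hcov ⟨hpAB, hpx⟩)
  refine ⟨ofW Badᶜ, isWeakStarOpen_ofW hBadc.isClosed.isOpen_compl, hxBad, ?_⟩
  rintro y ⟨hyAB, hyV⟩
  obtain ⟨a, ha, b, hb, hab⟩ := Set.mem_add.mp hyAB
  have hq : (StrongDual.toWeakDual a, StrongDual.toWeakDual b) ∈ preW A ×ˢ preW B :=
    ⟨by simpa using ha, by simpa using hb⟩
  have hqsum : StrongDual.toWeakDual a + StrongDual.toWeakDual b = StrongDual.toWeakDual y := by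
    rw [← map_add, hab]
  have hqO : (StrongDual.toWeakDual a, StrongDual.toWeakDual b) ∈ O := by
    by_contra hno
    exact hyV ⟨(StrongDual.toWeakDual a, StrongDual.toWeakDual b), ⟨hq, hno⟩, hqsum⟩
  obtain ⟨p, hpt, hpq⟩ := Set.mem_iUnion₂.mp hqO
  have hpR : p ∈ R := htR hpt
  obtain ⟨⟨hpA, hpB⟩, hpx⟩ := hpR
  have hcenter : WeakDual.toStrongDual p.1 + WeakDual.toStrongDual p.2 = x := by
    have := congrArg WeakDual.toStrongDual hpx
    simpa [map_add] using this
  have hda : dist a (WeakDual.toStrongDual p.1) ≤ δ := by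
    refine le_trans (Metric.dist_le_diam_of_mem (hAb.subset Set.inter_subset_left)
      ⟨ha, by simpa [mem_ofW] using hpq.1⟩ ⟨hpA, by simpa [mem_ofW] using hpU p (htR hpt)⟩)
      (hdU p (htR hpt))
  have hdb : dist b (WeakDual.toStrongDual p.2) ≤ δ := by
    refine le_trans (Metric.dist_le_diam_of_mem (hBb.subset Set.inter_subset_left)
      ⟨hb, by simpa [mem_ofW] using hpq.2⟩ ⟨hpB, by simpa [mem_ofW] using hpV p (htR hpt)⟩)
      (hdV p (htR hpt))
  have hdsum : dist y x ≤ δ + δ := by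
    calc dist y x = dist (a + b) (WeakDual.toStrongDual p.1 + WeakDual.toStrongDual p.2) := by
          rw [hab, hcenter]
      _ ≤ dist a (WeakDual.toStrongDual p.1) + dist b (WeakDual.toStrongDual p.2) :=
          dist_add_add_le _ _ _ _
      _ ≤ δ + δ := add_le_add hda hdb
  rw [Metric.mem_closedBall]
  linarith

end OneStep

/-! ### Supremum closure -/

section SupClosure
variable {E : Type*} [NormedAddCommGroup E] [NormedSpace ℝ E]

theorem szlenkIter_sSup_mem {K : Set (StrongDual ℝ E)} (ε : ℝ) {T : Set Ordinal} (hT : T.Nonempty)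
    (hbdd : BddAbove T) {x : StrongDual ℝ E} (hx : ∀ a ∈ T, x ∈ szlenkIter ε K a) :
    x ∈ szlenkIter ε K (sSup T) := by
  by_cases hmem : sSup T ∈ T
  · exact hx _ hmem
  · have hlt : ∀ a ∈ T, a < sSup T := fun a ha =>
      lt_of_le_of_ne (le_csSup hbdd ha) (fun h => hmem (h ▸ ha))
    have hlim : Order.IsSuccLimit (sSup T) := by
      obtain ⟨a₀, ha₀⟩ := id hT
      rw [Ordinal.isSuccLimit_iff]
      refine ⟨?_, Order.isSuccPrelimit_of_succ_lt ?_⟩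
      · intro h0
        exact absurd (h0 ▸ hlt a₀ ha₀) (by simp)
      · intro β hβ
        obtain ⟨a, haT, hβa⟩ := exists_lt_of_lt_csSup hT hβ
        exact lt_of_le_of_lt (Order.succ_le_of_lt hβa) (hlt a haT)
    rw [szlenkIter_limit ε K hlim]
    refine Set.mem_iInter.mpr fun β => Set.mem_iInter.mpr fun hβ => ?_
    obtain ⟨a, haT, hβa⟩ := exists_lt_of_lt_csSup hT hβ
    exact szlenkIter_anti ε K hβa.le (hx a haT)

set_option maxHeartbeats 1000000 in
/-- If `x ∈ szlenkIter δ A a + D` for every `a ∈ T` then also for `a = sSup T`. -/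
theorem mem_szlenkIter_sSup_add {A D : Set (StrongDual ℝ E)} (hA : IsWeakStarCompact A)
    (hD : IsWeakStarCompact D) (δ : ℝ) {T : Set Ordinal} (hT : T.Nonempty) (hbdd : BddAbove T)
    {x : StrongDual ℝ E} (hx : ∀ a ∈ T, x ∈ szlenkIter δ A a + D) :
    x ∈ szlenkIter δ A (sSup T) + D := by
  haveI : Nonempty T := hT.to_subtype
  have key : x ∈ (⋂ a : T, szlenkIter δ A a.1) + D := by
    refine mem_iInter_add (fun a : T => wsCompact_szlenkIter hA δ a.1) hD ?_
      (fun a : T => hx a.1 a.2)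
    rintro ⟨i, hi⟩ ⟨j, hj⟩
    refine ⟨⟨max i j, ?_⟩, szlenkIter_anti δ A (le_max_left i j),
      szlenkIter_anti δ A (le_max_right i j)⟩
    rcases max_cases i j with ⟨h, _⟩ | ⟨h, _⟩ <;> rw [h] <;> assumption
  refine Set.add_subset_add ?_ (subset_refl D) key
  intro z hz
  exact szlenkIter_sSup_mem δ hT hbdd fun a ha => Set.mem_iInter.mp hz ⟨a, ha⟩

end SupClosure

/-! ### The main transfinite invariant -/

section Invariant
universe uo
variable {E : Type*} [NormedAddCommGroup E] [NormedSpace ℝ E]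

set_option maxHeartbeats 2000000 in
theorem sz_add_invariant {A B : Set (StrongDual ℝ E)}
    (hA : IsWeakStarCompact A) (hB : IsWeakStarCompact B)
    (hAb : IsBounded A) (hBb : IsBounded B)
    {ε δ : ℝ} (hδ : 0 ≤ δ) (h4 : 4 * δ ≤ ε)
    {μ ν : Ordinal.{uo}} (hμ : szlenkIter δ A μ = ∅) (hν : szlenkIter δ B ν = ∅) :
    ∀ ζ : Ordinal.{uo}, ∀ x ∈ szlenkIter ε (A + B) ζ,
      ∃ a b : Ordinal.{uo}, ζ ≤ a ♯ b ∧ x ∈ szlenkIter δ A a + szlenkIter δ B b := by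
  have hdown : ∀ (x : StrongDual ℝ E) (p q : Ordinal.{uo} × Ordinal.{uo}), p ≤ q →
      x ∈ szlenkIter δ A q.1 + szlenkIter δ B q.2 →
      x ∈ szlenkIter δ A p.1 + szlenkIter δ B p.2 := fun x p q hpq hq =>
    Set.add_subset_add (szlenkIter_anti δ A hpq.1) (szlenkIter_anti δ B hpq.2) hq
  have hbound : ∀ (x : StrongDual ℝ E) (p : Ordinal.{uo} × Ordinal.{uo}),
      x ∈ szlenkIter δ A p.1 + szlenkIter δ B p.2 → p.1 < μ ∧ p.2 < ν := by
    intro x p hp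
    constructor
    · by_contra h
      have he : szlenkIter δ A p.1 = ∅ :=
        Set.eq_empty_of_subset_empty (hμ ▸ szlenkIter_anti δ A (not_lt.mp h))
      rw [he] at hp
      simpa using hp
    · by_contra h
      have he : szlenkIter δ B p.2 = ∅ :=
        Set.eq_empty_of_subset_empty (hν ▸ szlenkIter_anti δ B (not_lt.mp h))
      rw [he] at hp
      simpa using hp
  have hmaxext : ∀ (x : StrongDual ℝ E) (p : Ordinal.{uo} × Ordinal.{uo}),
      x ∈ szlenkIter δ A p.1 + szlenkIter δ B p.2 →
      ∃ q, p ≤ q ∧ x ∈ szlenkIter δ A q.1 + szlenkIter δ B q.2 ∧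
        ∀ r, x ∈ szlenkIter δ A r.1 + szlenkIter δ B r.2 → q ≤ r → r = q := by
    intro x p hp
    set T1 : Set Ordinal.{uo} := {a | x ∈ szlenkIter δ A a + szlenkIter δ B p.2} with hT1
    have hT1ne : T1.Nonempty := ⟨p.1, hp⟩
    have hT1bdd : BddAbove T1 := ⟨μ, fun a ha => (hbound x (a, p.2) ha).1.le⟩
    have ha' : x ∈ szlenkIter δ A (sSup T1) + szlenkIter δ B p.2 :=
      mem_szlenkIter_sSup_add hA (wsCompact_szlenkIter hB δ p.2) δ hT1ne hT1bdd
        (fun a ha => ha)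
    set T2 : Set Ordinal.{uo} := {b | x ∈ szlenkIter δ A (sSup T1) + szlenkIter δ B b} with hT2
    have hT2ne : T2.Nonempty := ⟨p.2, ha'⟩
    have hT2bdd : BddAbove T2 := ⟨ν, fun b hb => (hbound x (sSup T1, b) hb).2.le⟩
    have hb' : x ∈ szlenkIter δ A (sSup T1) + szlenkIter δ B (sSup T2) := by
      have hcomm : ∀ b ∈ T2, x ∈ szlenkIter δ B b + szlenkIter δ A (sSup T1) := by
        intro b hb
        rw [add_comm]
        exact hb
      have := mem_szlenkIter_sSup_add hB (wsCompact_szlenkIter hA δ (sSup T1)) δ hT2ne hT2bdd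
        hcomm
      rw [add_comm] at this
      exact this
    refine ⟨(sSup T1, sSup T2), ⟨le_csSup hT1bdd hp, le_csSup hT2bdd ha'⟩, hb', ?_⟩
    rintro ⟨c, d⟩ hr ⟨hc, hd⟩
    have hp2d : (p.2 : Ordinal) ≤ d := (le_csSup hT2bdd ha').trans hd
    have hcp2 : x ∈ szlenkIter δ A c + szlenkIter δ B p.2 :=
      hdown x (c, p.2) (c, d) ⟨le_rfl, hp2d⟩ hr
    have hceq : c = sSup T1 := le_antisymm (le_csSup hT1bdd hcp2) hc
    have hdT2 : d ∈ T2 := by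
      simp only [hT2, Set.mem_setOf_eq]
      rw [← hceq]
      exact hr
    have hdeq : d = sSup T2 := le_antisymm (le_csSup hT2bdd hdT2) hd
    exact Prod.ext hceq hdeq
  intro ζ
  induction ζ using Ordinal.limitRecOn with
  | zero =>
    intro x hx
    rw [szlenkIter_zero] at hx
    exact ⟨0, 0, zero_le, by simpa using hx⟩
  | add_one ζ IH =>
    rw [Ordinal.add_one_eq_succ]
    intro x hx
    by_contra hcon
    push_neg at hcon
    have hcon' : ∀ p : Ordinal.{uo} × Ordinal.{uo},
        x ∈ szlenkIter δ A p.1 + szlenkIter δ B p.2 → p.1 ♯ p.2 ≤ ζ := by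
      intro p hp
      by_contra h
      exact hcon p.1 p.2 (Order.succ_le_of_lt (not_le.mp h)) hp
    have hxζ : x ∈ szlenkIter ε (A + B) ζ :=
      szlenkIter_anti ε (A + B) (Order.le_succ ζ) hx
    set M : Set (Ordinal.{uo} × Ordinal.{uo}) :=
      {p | x ∈ szlenkIter δ A p.1 + szlenkIter δ B p.2 ∧ p.1 ♯ p.2 = ζ} with hM
    have hMfin : M.Finite := by
      apply SzAux.antichain_finite
      rintro p ⟨hp, hpv⟩ q ⟨hq, hqv⟩ hne hle
      rcases lt_or_eq_of_le hle.1 with h1 | h1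
      · have := Ordinal.nadd_lt_nadd_of_lt_of_le h1 hle.2
        rw [hpv, hqv] at this
        exact lt_irrefl _ this
      · have h2 : p.2 < q.2 := by
          rcases lt_or_eq_of_le hle.2 with h2 | h2
          · exact h2
          · exact absurd (Prod.ext h1 h2) hne
        have := Ordinal.nadd_lt_nadd_of_le_of_lt hle.1 h2
        rw [hpv, hqv] at this
        exact lt_irrefl _ this
    set MinU : Set (Ordinal.{uo} × Ordinal.{uo}) :=
      {r | (x ∉ szlenkIter δ A r.1 + szlenkIter δ B r.2) ∧
        ∀ w, (x ∉ szlenkIter δ A w.1 + szlenkIter δ B w.2) → w ≤ r → w = r} with hMinU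
    have hMinUfin : MinU.Finite := by
      apply SzAux.antichain_finite
      rintro p ⟨hp, hpmin⟩ q ⟨hq, hqmin⟩ hne hle
      exact hne (hqmin p hp hle)
    have hMopens : ∀ p ∈ M, ∃ V, IsWeakStarOpen V ∧ x ∈ V ∧
        (szlenkIter δ A p.1 + szlenkIter δ B p.2) ∩ V ⊆ closedBall x (2 * δ) := by
      rintro p ⟨hp, hpv⟩
      apply onestep_add (wsCompact_szlenkIter hA δ p.1) (wsCompact_szlenkIter hB δ p.2)
        (hAb.subset (szlenkIter_subset δ A p.1)) (hBb.subset (szlenkIter_subset δ B p.2)) hp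
      · rw [← szlenkIter_succ]
        intro hmem
        have := hcon' (Order.succ p.1, p.2) hmem
        rw [Ordinal.succ_nadd, hpv] at this
        exact absurd this (by simp)
      · rw [← szlenkIter_succ]
        intro hmem
        have := hcon' (p.1, Order.succ p.2) hmem
        rw [Ordinal.nadd_succ, hpv] at this
        exact absurd this (by simp)
    choose! V hVopen hxV hVball using hMopens
    have hMinUsep : ∀ r ∈ MinU, ∃ Y, IsWeakStarOpen Y ∧ x ∈ Y ∧
        Y ∩ (szlenkIter δ A r.1 + szlenkIter δ B r.2) = ∅ := by
      rintro r ⟨hr, _⟩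
      exact wsCompact_separation
        (wsCompact_add (wsCompact_szlenkIter hA δ r.1) (wsCompact_szlenkIter hB δ r.2)) hr
    choose! Y hYopen hxY hYdisj using hMinUsep
    set W : Set (StrongDual ℝ E) := (⋂ p ∈ M, V p) ∩ (⋂ r ∈ MinU, Y r) with hW
    have hWopen : IsWeakStarOpen W :=
      wsOpen_inter (isWeakStarOpen_biInter hMfin hVopen) (isWeakStarOpen_biInter hMinUfin hYopen)
    have hxW : x ∈ W :=
      ⟨Set.mem_iInter₂.mpr fun p hp => hxV p hp, Set.mem_iInter₂.mpr fun r hr => hxY r hr⟩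
    have hx' : x ∈ szlenkDeriv ε (szlenkIter ε (A + B) ζ) := by
      rw [← szlenkIter_succ]
      exact hx
    have hdiam := hx'.2 W hWopen hxW
    have hsub : szlenkIter ε (A + B) ζ ∩ W ⊆ closedBall x (2 * δ) := by
      rintro y ⟨hy, hyW⟩
      obtain ⟨a, b, hab, hmem⟩ := IH y hy
      obtain ⟨a', ha', b', hb', habv⟩ := SzAux.nadd_split' hab
      have hmem' : y ∈ szlenkIter δ A a' + szlenkIter δ B b' :=
        hdown y (a', b') (a, b) ⟨ha', hb'⟩ hmem
      by_cases hxmem : x ∈ szlenkIter δ A a' + szlenkIter δ B b'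
      · have hpM : (a', b') ∈ M := ⟨hxmem, habv⟩
        exact hVball _ hpM ⟨hmem', (Set.mem_iInter₂.mp hyW.1) _ hpM⟩
      · obtain ⟨q, hqU, hqle, hqmin⟩ := SzAux.exists_minimal_le
          (U := {w : Ordinal × Ordinal | x ∉ szlenkIter δ A w.1 + szlenkIter δ B w.2})
          (p := (a', b')) hxmem
        have hqMinU : q ∈ MinU := ⟨hqU, fun w hw hwle => hqmin w hw hwle⟩
        have hyZ : y ∈ szlenkIter δ A q.1 + szlenkIter δ B q.2 :=
          hdown y q (a', b') hqle hmem'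
        have hmem2 : y ∈ Y q ∩ (szlenkIter δ A q.1 + szlenkIter δ B q.2) :=
          ⟨(Set.mem_iInter₂.mp hyW.2) _ hqMinU, hyZ⟩
        rw [hYdisj q hqMinU] at hmem2
        exact absurd hmem2 (Set.notMem_empty y)
    have hbnd : Metric.diam (szlenkIter ε (A + B) ζ ∩ W) ≤ 4 * δ := by
      refine le_trans (Metric.diam_mono hsub Metric.isBounded_closedBall) ?_
      have := Metric.diam_closedBall (x := x) (r := 2 * δ) (by linarith)
      linarith
    linarith
  | limit lam hlim IH =>
    intro x hx
    have hcof : ∀ ζ' < lam, ∃ p : Ordinal.{uo} × Ordinal.{uo}, ζ' ≤ p.1 ♯ p.2 ∧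
        x ∈ szlenkIter δ A p.1 + szlenkIter δ B p.2 := by
      intro ζ' hζ'
      obtain ⟨a, b, h1, h2⟩ := IH ζ' hζ' x (szlenkIter_anti ε (A + B) hζ'.le hx)
      exact ⟨(a, b), h1, h2⟩
    set MaxS : Set (Ordinal.{uo} × Ordinal.{uo}) :=
      {p | x ∈ szlenkIter δ A p.1 + szlenkIter δ B p.2 ∧
        ∀ r, x ∈ szlenkIter δ A r.1 + szlenkIter δ B r.2 → p ≤ r → r = p} with hMaxS
    have hMaxSfin : MaxS.Finite := by
      apply SzAux.antichain_finite
      rintro p ⟨hp, hpmax⟩ q ⟨hq, hqmax⟩ hne hle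
      exact hne ((hpmax q hq hle).symm ▸ rfl)
    have hMaxSne : MaxS.Nonempty := by
      obtain ⟨p, _, hpmem⟩ := hcof 0 hlim.pos
      obtain ⟨q, _, hqmem, hqmax⟩ := hmaxext x p hpmem
      exact ⟨q, hqmem, hqmax⟩
    obtain ⟨q₀, hq₀, hq₀max⟩ := Set.Finite.exists_maximalFor
      (fun p : Ordinal.{uo} × Ordinal.{uo} => p.1 ♯ p.2) MaxS hMaxSfin hMaxSne
    refine ⟨q₀.1, q₀.2, ?_, hq₀.1⟩
    by_contra hlt
    have hlt' : q₀.1 ♯ q₀.2 < lam := not_le.mp hlt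
    obtain ⟨p, hple, hpmem⟩ := hcof (Order.succ (q₀.1 ♯ q₀.2)) (hlim.succ_lt hlt')
    obtain ⟨q, hpq, hqmem, hqmax⟩ := hmaxext x p hpmem
    have hqMaxS : q ∈ MaxS := ⟨hqmem, hqmax⟩
    have hlt2 : q₀.1 ♯ q₀.2 < q.1 ♯ q.2 :=
      lt_of_lt_of_le (Order.lt_succ _) (hple.trans (Ordinal.nadd_le_nadd hpq.1 hpq.2))
    exact absurd (hq₀max hqMaxS hlt2.le) (not_le.mpr hlt2)

end Invariant

/-! ### Adjoint images and the index extraction -/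

section Final

variable {E F : Type*} [NormedAddCommGroup E] [NormedSpace ℝ E]
  [NormedAddCommGroup F] [NormedSpace ℝ F]

theorem adjImage_wsCompact (T : E →L[ℝ] F) :
    IsWeakStarCompact (adjImage T (closedBall (0 : StrongDual ℝ F) 1)) := by
  rw [isWeakStarCompact_iff]
  set φ : WeakDual ℝ F → WeakDual ℝ E := fun g =>
    StrongDual.toWeakDual ((WeakDual.toStrongDual g).comp T) with hφ
  have hφcont : Continuous φ := by
    apply WeakDual.continuous_of_continuous_eval
    intro y
    exact WeakDual.eval_continuous (T y)
  have heq : preW (adjImage T (closedBall (0 : StrongDual ℝ F) 1)) =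
      φ '' (preW (closedBall (0 : StrongDual ℝ F) 1)) := by
    ext g
    constructor
    · rintro hg
      obtain ⟨h, hh, hcomp⟩ := hg
      have hcomp' : h.comp T = WeakDual.toStrongDual g := hcomp
      refine ⟨StrongDual.toWeakDual h, mem_preW.mpr (by simpa using hh), ?_⟩
      simp only [hφ, toNormedDual_toWeakDual]
      rw [hcomp']
      simp
    · rintro ⟨h, hh, rfl⟩
      exact ⟨WeakDual.toStrongDual h, hh, rfl⟩
  rw [heq]
  exact (WeakDual.isCompact_closedBall (𝕜 := ℝ) (E := F) 0 1).image hφcont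

theorem adjImage_bounded (T : E →L[ℝ] F) :
    IsBounded (adjImage T (closedBall (0 : StrongDual ℝ F) 1)) := by
  apply (Metric.isBounded_closedBall (x := (0 : StrongDual ℝ E)) (r := ‖T‖)).subset
  rintro _ ⟨g, hg, rfl⟩
  show g.comp T ∈ _
  rw [Metric.mem_closedBall, dist_zero_right]
  calc ‖g.comp T‖ ≤ ‖g‖ * ‖T‖ := g.opNorm_comp_le T
    _ ≤ 1 * ‖T‖ := by
        apply mul_le_mul_of_nonneg_right _ (norm_nonneg T)
        simpa [dist_zero_right] using Metric.mem_closedBall.mp hg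
    _ = ‖T‖ := one_mul _

theorem adjImage_add_subset (S T : E →L[ℝ] F) :
    adjImage (S + T) (closedBall (0 : StrongDual ℝ F) 1) ⊆
      adjImage S (closedBall (0 : StrongDual ℝ F) 1) + adjImage T (closedBall (0 : StrongDual ℝ F) 1) := by
  rintro _ ⟨g, hg, rfl⟩
  show g.comp (S + T) ∈ _
  have : g.comp (S + T) = g.comp S + g.comp T := by
    ext z
    simp [ContinuousLinearMap.add_apply]
  rw [this]
  exact Set.add_mem_add ⟨g, hg, rfl⟩ ⟨g, hg, rfl⟩

theorem exists_small_index {K : Set (StrongDual ℝ E)} (hK : IsWeakStarCompact K) (δ : ℝ)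
    {α : Ordinal} (hα : α ≠ 0) (h : szlenkIter δ K (Ordinal.omega0 ^ α) = ∅) :
    ∃ μ < Ordinal.omega0 ^ α, szlenkIter δ K μ = ∅ := by
  have hone : (1 : Ordinal) < Ordinal.omega0 ^ α := by
    calc (1:Ordinal) < Ordinal.omega0 := Ordinal.one_lt_omega0
      _ = Ordinal.omega0 ^ (1:Ordinal) := (Ordinal.opow_one _).symm
      _ ≤ Ordinal.omega0 ^ α := Ordinal.opow_le_opow_right Ordinal.omega0_pos
          (Ordinal.one_le_iff_ne_zero.mpr hα)
  have hlim : Order.IsSuccLimit (Ordinal.omega0 ^ α) := by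
    rw [Ordinal.isSuccLimit_iff]
    refine ⟨?_, Order.isSuccPrelimit_of_succ_lt ?_⟩
    · exact (lt_trans zero_lt_one hone).ne'
    · intro β hβ
      rw [← Ordinal.add_one_eq_succ]
      exact Ordinal.principal_add_omega0_opow α hβ hone
  set I : Set Ordinal := {o | szlenkIter δ K o = ∅} with hI
  have hIne : I.Nonempty := ⟨_, h⟩
  have hmem : sInf I ∈ I := csInf_mem hIne
  have hle : sInf I ≤ Ordinal.omega0 ^ α := csInf_le' h
  rcases lt_or_eq_of_le hle with hlt | heq
  · exact ⟨sInf I, hlt, hmem⟩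
  · exfalso
    have hne : ∀ β < Ordinal.omega0 ^ α, (szlenkIter δ K β).Nonempty := by
      intro β hβ
      rw [Set.nonempty_iff_ne_empty]
      intro hemp
      have : sInf I ≤ β := csInf_le' hemp
      rw [heq] at this
      exact absurd hβ (not_lt.mpr this)
    have := szlenkIter_nonempty_limit hK δ hlim hne
    rw [heq] at hmem
    rw [hI] at hmem
    simp only [Set.mem_setOf_eq] at hmem
    rw [hmem] at this
    simpa using this

end Final

/-- If `S, T : E → F` are bounded linear operators between Banach spaces with
`Sz(S) ≤ ω^α` and `Sz(T) ≤ ω^α`, then `Sz(S + T) ≤ ω^α`. -/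
theorem szOpLE_add
    {E F : Type*} [NormedAddCommGroup E] [NormedSpace ℝ E] [CompleteSpace E]
    [NormedAddCommGroup F] [NormedSpace ℝ F] [CompleteSpace F]
    (α : Ordinal) (S T : E →L[ℝ] F)
    (hS : SzOpLE S (Ordinal.omega0 ^ α)) (hT : SzOpLE T (Ordinal.omega0 ^ α)) :
    SzOpLE (S + T) (Ordinal.omega0 ^ α) := by
  intro ε hε
  have hδpos : (0:ℝ) < ε / 4 := by linarith
  have hAc := adjImage_wsCompact S
  have hBc := adjImage_wsCompact T
  have hAb := adjImage_bounded S
  have hBb := adjImage_bounded T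
  have hABb : IsBounded (adjImage S (closedBall (0 : StrongDual ℝ F) 1) +
      adjImage T (closedBall (0 : StrongDual ℝ F) 1)) := hAb.add hBb
  have hμν : ∃ μ ν : Ordinal, szlenkIter (ε/4) (adjImage S (closedBall (0 : StrongDual ℝ F) 1)) μ = ∅ ∧
      szlenkIter (ε/4) (adjImage T (closedBall (0 : StrongDual ℝ F) 1)) ν = ∅ ∧
      ∀ a b : Ordinal, a < μ → b < ν → a ♯ b < Ordinal.omega0 ^ α := by
    rcases eq_or_ne α 0 with rfl | hα
    · refine ⟨1, 1, ?_, ?_, ?_⟩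
      · have := hS (ε/4) hδpos
        rwa [Ordinal.opow_zero] at this
      · have := hT (ε/4) hδpos
        rwa [Ordinal.opow_zero] at this
      · intro a b ha hb
        rw [Ordinal.lt_one_iff_zero] at ha hb
        subst ha; subst hb
        rw [Ordinal.nadd_zero, Ordinal.opow_zero]
        exact zero_lt_one
    · obtain ⟨μ, hμlt, hμe⟩ := exists_small_index hAc (ε/4) hα (hS (ε/4) hδpos)
      obtain ⟨ν, hνlt, hνe⟩ := exists_small_index hBc (ε/4) hα (hT (ε/4) hδpos)
      exact ⟨μ, ν, hμe, hνe, fun a b ha hb =>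
        SzAux.nadd_lt_omega0_opow (ha.trans hμlt) (hb.trans hνlt)⟩
  obtain ⟨μ, ν, hμe, hνe, hclose⟩ := hμν
  have main := sz_add_invariant (ε := ε) (δ := ε/4) hAc hBc hAb hBb (le_of_lt hδpos)
    (by linarith) hμe hνe
  show szlenkIter ε (adjImage (S + T) (closedBall (0 : StrongDual ℝ F) 1)) (Ordinal.omega0 ^ α) = ∅
  rw [Set.eq_empty_iff_forall_notMem]
  intro x hx
  have hx' := szlenkIter_mono (adjImage_add_subset S T) hABb ε (Ordinal.omega0 ^ α) hx
  obtain ⟨a, b, hab, hmem⟩ := main _ x hx'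
  have ha : a < μ := by
    by_contra h
    have he : szlenkIter (ε/4) (adjImage S (closedBall (0 : StrongDual ℝ F) 1)) a = ∅ :=
      Set.eq_empty_of_subset_empty (hμe ▸ szlenkIter_anti _ _ (not_lt.mp h))
    rw [he] at hmem
    simpa using hmem
  have hb : b < ν := by
    by_contra h
    have he : szlenkIter (ε/4) (adjImage T (closedBall (0 : StrongDual ℝ F) 1)) b = ∅ :=
      Set.eq_empty_of_subset_empty (hνe ▸ szlenkIter_anti _ _ (not_lt.mp h))
    rw [he] at hmem
    simpa using hmem
  exact absurd hab (not_le.mpr (hclose a b ha hb))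
end
end

section
/- Let E and F be Banach spaces and T : E → F a bounded linear operator. Then T is a compact operator if and only if Sz(T) ≤ 1, i.e. if and only if s_ε(T* B_{F*}) = ∅ for every ε > 0. -/
open NormedSpace Metric
open scoped Ordinal Pointwise

noncomputable section

section AuxLemmas

variable {E F : Type*} [NormedAddCommGroup E] [NormedSpace ℝ E]
  [NormedAddCommGroup F] [NormedSpace ℝ F]

/-- If `K` is norm-compact, every Szlenk derivation of `K` is empty. -/
lemma szlenkDeriv_eq_empty_of_isCompact {K : Set (StrongDual ℝ E)} (hK : IsCompact K)
    {ε : ℝ} (hε : 0 < ε) : szlenkDeriv ε K = ∅ := by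
  rw [Set.eq_empty_iff_forall_notMem]
  rintro x ⟨hxK, hx⟩
  have hDc : IsCompact (K ∩ (ball x (ε/3))ᶜ) := hK.inter_right isOpen_ball.isClosed_compl
  have hDw : IsCompact (StrongDual.toWeakDual '' (K ∩ (ball x (ε/3))ᶜ) : Set (WeakDual ℝ E)) :=
    hDc.image Dual.toWeakDual_continuous
  set V : Set (StrongDual ℝ E) := StrongDual.toWeakDual ⁻¹' (StrongDual.toWeakDual '' (K ∩ (ball x (ε/3))ᶜ))ᶜ
    with hVdef
  have hVopen : IsWeakStarOpen V := by
    unfold IsWeakStarOpen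
    rw [hVdef, Set.image_preimage_eq _ (StrongDual.toWeakDual (𝕜 := ℝ) (E := E)).surjective]
    exact hDw.isClosed.isOpen_compl
  have hxV : x ∈ V := by
    rintro ⟨d, hd, hde⟩
    rw [StrongDual.toWeakDual_inj] at hde
    subst hde
    exact hd.2 (mem_ball_self (by linarith))
  have hsub : K ∩ V ⊆ ball x (ε/3) := by
    rintro y ⟨hyK, hyV⟩
    by_contra hy
    exact hyV ⟨y, ⟨hyK, hy⟩, rfl⟩
  have hdiam : Metric.diam (K ∩ V) ≤ 2 * (ε/3) :=
    le_trans (Metric.diam_mono hsub isBounded_ball) (Metric.diam_ball (by linarith))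
  have := hx V hVopen hxV
  linarith

/-- If all Szlenk derivations of a bounded weak-*-compact set are empty, it is norm-compact. -/
lemma isCompact_of_szlenkDeriv_empty {K : Set (StrongDual ℝ E)} (hb : Bornology.IsBounded K)
    (hw : IsCompact (StrongDual.toWeakDual '' K : Set (WeakDual ℝ E)))
    (h : ∀ ε : ℝ, 0 < ε → szlenkDeriv ε K = ∅) : IsCompact K := by
  have key : ContinuousOn (fun g : WeakDual ℝ E => WeakDual.toStrongDual g)
      (StrongDual.toWeakDual '' K) := by
    rintro g' ⟨x, hxK, rfl⟩
    rw [ContinuousWithinAt, Metric.tendsto_nhds]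
    intro δ hδ
    have hε : (0:ℝ) < δ/2 := by linarith
    have hxd : x ∉ szlenkDeriv (δ/2) K := by
      rw [h _ hε]; exact Set.notMem_empty x
    have hex : ∃ V, IsWeakStarOpen V ∧ x ∈ V ∧ ¬ (δ/2 < Metric.diam (K ∩ V)) := by
      by_contra hcon
      push_neg at hcon
      exact hxd ⟨hxK, fun V hV hxV => hcon V hV hxV⟩
    obtain ⟨V, hVopen, hxV, hVd⟩ := hex
    push_neg at hVd
    filter_upwards [mem_nhdsWithin_of_mem_nhds (hVopen.mem_nhds ⟨x, hxV, rfl⟩),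
      self_mem_nhdsWithin] with g hgV hgK
    obtain ⟨y, hyV, rfl⟩ := hgV
    obtain ⟨z, hzK, hzy⟩ := hgK
    rw [StrongDual.toWeakDual_inj] at hzy
    subst hzy
    have hdist : dist (WeakDual.toStrongDual (StrongDual.toWeakDual z))
        (WeakDual.toStrongDual (StrongDual.toWeakDual x)) ≤ Metric.diam (K ∩ V) :=
      Metric.dist_le_diam_of_mem (hb.subset Set.inter_subset_left) ⟨hzK, hyV⟩ ⟨hxK, hxV⟩
    exact lt_of_le_of_lt (hdist.trans hVd) (by linarith)
  have himg : (fun g : WeakDual ℝ E => WeakDual.toStrongDual g) '' (StrongDual.toWeakDual '' K) = K := by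
    rw [Set.image_image]
    exact Set.image_id' K
  rw [← himg]
  exact hw.image_of_continuousOn key

lemma norm_le_of_mem_adjImage (T : E →L[ℝ] F) {g : StrongDual ℝ E}
    (hg : g ∈ adjImage T (closedBall (0 : StrongDual ℝ F) 1)) : ‖g‖ ≤ ‖T‖ := by
  obtain ⟨f, hf, rfl⟩ := hg
  rw [mem_closedBall_zero_iff] at hf
  calc ‖f.comp T‖ ≤ ‖f‖ * ‖T‖ := ContinuousLinearMap.opNorm_comp_le f T
    _ ≤ 1 * ‖T‖ := mul_le_mul_of_nonneg_right hf (norm_nonneg T)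
    _ = ‖T‖ := one_mul _

lemma isBounded_adjImage (T : E →L[ℝ] F) :
    Bornology.IsBounded (adjImage T (closedBall (0 : StrongDual ℝ F) 1)) :=
  (isBounded_closedBall (x := (0 : StrongDual ℝ E)) (r := ‖T‖)).subset
    (fun g hg => mem_closedBall_zero_iff.2 (norm_le_of_mem_adjImage T hg))

lemma isCompact_weakDual_adjImage (T : E →L[ℝ] F) :
    IsCompact (StrongDual.toWeakDual '' adjImage T (closedBall (0 : StrongDual ℝ F) 1) :
      Set (WeakDual ℝ E)) := by
  have hA : Continuous fun g : WeakDual ℝ F =>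
      (StrongDual.toWeakDual ((WeakDual.toStrongDual g).comp T) : WeakDual ℝ E) :=
    WeakDual.continuous_of_continuous_eval fun y => WeakDual.eval_continuous (T y)
  have hball : IsCompact (WeakDual.toStrongDual ⁻¹' (closedBall (0 : StrongDual ℝ F) 1)) :=
    WeakDual.isCompact_closedBall 0 1
  have himg := hball.image hA
  have heq : (fun g : WeakDual ℝ F =>
      (StrongDual.toWeakDual ((WeakDual.toStrongDual g).comp T) : WeakDual ℝ E)) ''
        (WeakDual.toStrongDual ⁻¹' (closedBall (0 : StrongDual ℝ F) 1)) =
      StrongDual.toWeakDual '' adjImage T (closedBall (0 : StrongDual ℝ F) 1) := by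
    ext g
    constructor
    · rintro ⟨g', hg', rfl⟩
      exact ⟨(WeakDual.toStrongDual g').comp T, ⟨WeakDual.toStrongDual g', hg', rfl⟩, rfl⟩
    · rintro ⟨_, ⟨f, hf, rfl⟩, rfl⟩
      exact ⟨StrongDual.toWeakDual f, hf, rfl⟩
  rwa [heq] at himg

set_option maxHeartbeats 1000000 in
lemma isCompact_adjImage_of_isCompactOperator (T : E →L[ℝ] F) (hT : IsCompactOperator T) :
    IsCompact (adjImage T (closedBall (0 : StrongDual ℝ F) 1)) := by
  obtain ⟨C, hC, hCmem⟩ := hT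
  obtain ⟨r, hr, hball⟩ := Metric.mem_nhds_iff.mp hCmem
  have hS : IsCompact (WeakDual.toStrongDual ⁻¹' (closedBall (0 : StrongDual ℝ F) 1)) :=
    WeakDual.isCompact_closedBall 0 1
  set φ : WeakDual ℝ F → StrongDual ℝ E := fun g => (WeakDual.toStrongDual g).comp T with hφdef
  have hφ : ContinuousOn φ (WeakDual.toStrongDual ⁻¹' (closedBall (0 : StrongDual ℝ F) 1)) := by
    intro g₀ hg₀
    rw [ContinuousWithinAt, Metric.tendsto_nhds]
    intro δ hδ
    have hrδ : (0:ℝ) < r * δ / 16 := by positivity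
    obtain ⟨t, htC, htfin, htcover⟩ := hC.finite_cover_balls hrδ
    set U : Set (WeakDual ℝ F) :=
      ⋂ y ∈ t, (fun g : WeakDual ℝ F => g y) ⁻¹' (ball (g₀ y) (r * δ / 16)) with hUdef
    have hUopen : IsOpen U :=
      htfin.isOpen_biInter fun y _ => isOpen_ball.preimage (WeakDual.eval_continuous y)
    have hg₀U : g₀ ∈ U := Set.mem_iInter₂.2 fun y _ => mem_ball_self hrδ
    filter_upwards [mem_nhdsWithin_of_mem_nhds (hUopen.mem_nhds hg₀U),
      self_mem_nhdsWithin] with g hgU hgS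
    rw [dist_eq_norm]
    have hφsub : φ g - φ g₀ = ((WeakDual.toStrongDual g) - (WeakDual.toStrongDual g₀)).comp T := by
      rw [ContinuousLinearMap.sub_comp]
    set h : StrongDual ℝ F := WeakDual.toStrongDual g - WeakDual.toStrongDual g₀ with hhdef
    have hh2 : ‖h‖ ≤ 2 := by
      have h1 : ‖WeakDual.toStrongDual g‖ ≤ 1 := mem_closedBall_zero_iff.1 hgS
      have h2 : ‖WeakDual.toStrongDual g₀‖ ≤ 1 := mem_closedBall_zero_iff.1 hg₀
      calc ‖h‖ ≤ ‖WeakDual.toStrongDual g‖ + ‖WeakDual.toStrongDual g₀‖ := norm_sub_le _ _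
        _ ≤ 2 := by linarith
    have hbound : ∀ x : E, ‖h (T x)‖ ≤ (δ/2) * ‖x‖ := by
      intro x
      rcases eq_or_ne x 0 with rfl | hx
      · simp
      · have hxpos : 0 < ‖x‖ := norm_pos_iff.2 hx
        set c : ℝ := r / (2 * ‖x‖) with hcdef
        have hc : 0 < c := by positivity
        have hzc : ‖c • x‖ = r / 2 := by
          rw [norm_smul, Real.norm_of_nonneg hc.le, hcdef]
          field_simp
        have hz : c • x ∈ ball (0:E) r := by
          rw [mem_ball_zero_iff, hzc]; linarith
        have hTz : T (c • x) ∈ C := hball hz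
        obtain ⟨y, hyt, hy⟩ := Set.mem_iUnion₂.1 (htcover hTz)
        rw [mem_ball] at hy
        have hgy : dist (g y) (g₀ y) < r * δ / 16 := Set.mem_iInter₂.1 hgU y hyt
        have hhy : ‖h y‖ < r * δ / 16 := by
          have e : h y = g y - g₀ y := rfl
          rw [e, Real.norm_eq_abs, ← Real.dist_eq]
          exact hgy
        have est : ‖h (T (c • x))‖ ≤ 3 * (r * δ / 16) := by
          have e1 : ‖h (T (c • x)) - h y‖ ≤ ‖h‖ * ‖T (c • x) - y‖ := by
            rw [← map_sub]; exact h.le_opNorm _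
          have e2 : ‖T (c • x) - y‖ ≤ r * δ / 16 := by
            rw [← dist_eq_norm]; exact hy.le
          calc ‖h (T (c • x))‖ = ‖(h (T (c • x)) - h y) + h y‖ := by rw [sub_add_cancel]
            _ ≤ ‖h (T (c • x)) - h y‖ + ‖h y‖ := norm_add_le _ _
            _ ≤ ‖h‖ * ‖T (c • x) - y‖ + r * δ / 16 := add_le_add e1 hhy.le
            _ ≤ 2 * (r * δ / 16) + r * δ / 16 := by
                have := mul_le_mul hh2 e2 (norm_nonneg _) (by norm_num)
                linarith
            _ = 3 * (r * δ / 16) := by ring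
        have hsmul : h (T (c • x)) = c * h (T x) := by
          rw [map_smul, map_smul, smul_eq_mul]
        rw [hsmul, norm_mul, Real.norm_of_nonneg hc.le] at est
        have hcx : c * (2 * ‖x‖) = r := by
          rw [hcdef]; field_simp
        have h1 : ‖h (T x)‖ ≤ (3 * (r * δ / 16)) / c :=
          (le_div_iff₀ hc).2 (by linarith [est])
        have h2 : (3 * (r * δ / 16)) / c = 3 * δ * ‖x‖ / 8 := by
          rw [hcdef]
          field_simp
          ring
        rw [h2] at h1
        nlinarith [mul_pos hδ hxpos]
    have hopn : ‖h.comp T‖ ≤ δ/2 :=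
      ContinuousLinearMap.opNorm_le_bound _ (by positivity) hbound
    rw [hφsub]
    calc ‖h.comp T‖ ≤ δ/2 := hopn
      _ < δ := by linarith
  have himg := hS.image_of_continuousOn hφ
  have heq : φ '' (WeakDual.toStrongDual ⁻¹' (closedBall (0 : StrongDual ℝ F) 1)) =
      adjImage T (closedBall (0 : StrongDual ℝ F) 1) := by
    ext g
    constructor
    · rintro ⟨g', hg', rfl⟩
      exact ⟨WeakDual.toStrongDual g', hg', rfl⟩
    · rintro ⟨f, hf, rfl⟩
      exact ⟨StrongDual.toWeakDual f, hf, rfl⟩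
  rwa [heq] at himg

end AuxLemmas

section ConvAux

variable {E F : Type*} [NormedAddCommGroup E] [NormedSpace ℝ E]
  [NormedAddCommGroup F] [NormedSpace ℝ F]

set_option maxHeartbeats 1000000 in
lemma isCompactOperator_of_isCompact_adjImage [CompleteSpace F] (T : E →L[ℝ] F)
    (hK : IsCompact (adjImage T (closedBall (0 : StrongDual ℝ F) 1))) : IsCompactOperator T := by
  have htb : TotallyBounded (T '' closedBall 0 1) := by
    rw [Metric.totallyBounded_iff]
    intro δ hδ
    have hε : (0:ℝ) < δ/8 := by linarith
    obtain ⟨t, htK, htfin, htcover⟩ := hK.finite_cover_balls hε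
    haveI : Fintype t := htfin.fintype
    set Φ : E → (t → ℝ) := fun x g => (g : StrongDual ℝ E) x with hΦdef
    have hΦbdd : Bornology.IsBounded (Φ '' closedBall 0 1) := by
      refine (isBounded_closedBall (x := (0 : t → ℝ)) (r := ‖T‖)).subset ?_
      rintro _ ⟨x, hx, rfl⟩
      rw [mem_closedBall_zero_iff]
      refine pi_norm_le_iff_of_nonneg (norm_nonneg T) |>.2 fun g => ?_
      calc ‖(g : StrongDual ℝ E) x‖ ≤ ‖(g : StrongDual ℝ E)‖ * ‖x‖ := (g : StrongDual ℝ E).le_opNorm x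
        _ ≤ ‖T‖ * 1 := by
            refine mul_le_mul (norm_le_of_mem_adjImage T (htK g.2))
              (mem_closedBall_zero_iff.1 hx) (norm_nonneg x) (norm_nonneg T)
        _ = ‖T‖ := mul_one _
    obtain ⟨t', ht'sub, ht'fin, ht'cover⟩ := hΦbdd.isCompact_closure.finite_cover_balls hε
    have hchoice : ∀ c ∈ t', ∃ x, x ∈ closedBall (0:E) 1 ∧ dist (Φ x) c < δ/8 := by
      intro c hc
      obtain ⟨y, hy, hyd⟩ := Metric.mem_closure_iff.1 (ht'sub hc) _ hε
      obtain ⟨x, hx, rfl⟩ := hy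
      exact ⟨x, hx, by rwa [dist_comm]⟩
    choose! xc hxc1 hxc2 using hchoice
    refine ⟨(fun c => T (xc c)) '' t', ht'fin.image _, ?_⟩
    rintro _ ⟨x, hx, rfl⟩
    have hΦx : Φ x ∈ closure (Φ '' closedBall 0 1) := subset_closure ⟨x, hx, rfl⟩
    obtain ⟨c, hct', hc⟩ := Set.mem_iUnion₂.1 (ht'cover hΦx)
    rw [mem_ball] at hc
    refine Set.mem_iUnion₂.2 ⟨T (xc c), Set.mem_image_of_mem _ hct', ?_⟩
    rw [mem_ball, dist_eq_norm]
    obtain ⟨f, hf1, hf2⟩ := exists_dual_vector'' ℝ (T x - T (xc c))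
    have hfK : f.comp T ∈ adjImage T (closedBall (0 : StrongDual ℝ F) 1) :=
      ⟨f, mem_closedBall_zero_iff.2 hf1, rfl⟩
    obtain ⟨g, hgt, hg⟩ := Set.mem_iUnion₂.1 (htcover hfK)
    rw [mem_ball] at hg
    have hcoord : dist (Φ x ⟨g, hgt⟩) (Φ (xc c) ⟨g, hgt⟩) < δ/4 := by
      calc dist (Φ x ⟨g, hgt⟩) (Φ (xc c) ⟨g, hgt⟩)
          ≤ dist (Φ x ⟨g, hgt⟩) (c ⟨g, hgt⟩) + dist (c ⟨g, hgt⟩) (Φ (xc c) ⟨g, hgt⟩) :=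
            dist_triangle _ _ _
        _ ≤ dist (Φ x) c + dist c (Φ (xc c)) := by
            gcongr
            · exact dist_le_pi_dist (Φ x) c _
            · exact dist_le_pi_dist c (Φ (xc c)) _
        _ < δ/8 + δ/8 := by
            refine add_lt_add hc ?_
            rw [dist_comm]
            exact hxc2 c hct'
        _ = δ/4 := by ring
    have hxx : ‖x - xc c‖ ≤ 2 := by
      have h1 := mem_closedBall_zero_iff.1 hx
      have h2 := mem_closedBall_zero_iff.1 (hxc1 c hct')
      calc ‖x - xc c‖ ≤ ‖x‖ + ‖xc c‖ := norm_sub_le _ _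
        _ ≤ 2 := by linarith
    have key : ‖T x - T (xc c)‖ = f (T x - T (xc c)) := by exact_mod_cast hf2.symm
    have e1 : f (T x - T (xc c)) = (f.comp T) x - (f.comp T) (xc c) := by
      rw [map_sub]; rfl
    have e2 : |(f.comp T) x - (f.comp T) (xc c) - (g x - g (xc c))| ≤ δ/8 * 2 := by
      have : (f.comp T) x - (f.comp T) (xc c) - (g x - g (xc c)) = (f.comp T - g) (x - xc c) := by
        simp [map_sub]
        ring
      rw [this]
      calc |(f.comp T - g) (x - xc c)| ≤ ‖f.comp T - g‖ * ‖x - xc c‖ :=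
            (f.comp T - g).le_opNorm _
        _ ≤ δ/8 * 2 := by
            refine mul_le_mul ?_ hxx (norm_nonneg _) (by linarith)
            rw [← dist_eq_norm]
            exact hg.le
    have e3 : |g x - g (xc c)| < δ/4 := by
      have : Φ x ⟨g, hgt⟩ = g x := rfl
      rw [Real.dist_eq] at hcoord
      exact hcoord
    have : |(f.comp T) x - (f.comp T) (xc c)| < δ/2 := by
      calc |(f.comp T) x - (f.comp T) (xc c)|
          ≤ |(f.comp T) x - (f.comp T) (xc c) - (g x - g (xc c))| + |g x - g (xc c)| := by
            have := abs_add_le ((f.comp T) x - (f.comp T) (xc c) - (g x - g (xc c))) (g x - g (xc c))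
            simpa using this
        _ < δ/8 * 2 + δ/4 := add_lt_add_of_le_of_lt e2 e3
        _ = δ/2 := by ring
    rw [key, e1]
    calc (f.comp T) x - (f.comp T) (xc c) ≤ |(f.comp T) x - (f.comp T) (xc c)| := le_abs_self _
      _ < δ/2 := this
      _ < δ := by linarith
  have hcc : IsCompact (closure (T '' closedBall 0 1)) :=
    htb.closure.isCompact_of_isClosed isClosed_closure
  exact ⟨_, hcc, Filter.mem_of_superset (Metric.ball_mem_nhds 0 one_pos)
    (fun x hx => subset_closure ⟨x, ball_subset_closedBall hx, rfl⟩)⟩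

end ConvAux

/-- A bounded linear operator `T : E → F` between Banach spaces is compact if and only if
`Sz(T) ≤ 1`, i.e. `s_ε(T* B_{F*}) = ∅` for every `ε > 0`. -/
theorem isCompactOperator_iff_szlenkDeriv_empty
    {E F : Type*} [NormedAddCommGroup E] [NormedSpace ℝ E] [CompleteSpace E]
    [NormedAddCommGroup F] [NormedSpace ℝ F] [CompleteSpace F]
    (T : E →L[ℝ] F) :
    IsCompactOperator T ↔
      ∀ ε : ℝ, 0 < ε → szlenkDeriv ε (adjImage T (closedBall (0 : StrongDual ℝ F) 1)) = ∅ := by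
  constructor
  · intro hT ε hε
    exact szlenkDeriv_eq_empty_of_isCompact (isCompact_adjImage_of_isCompactOperator T hT) hε
  · intro h
    exact isCompactOperator_of_isCompact_adjImage T
      (isCompact_of_szlenkDeriv_empty (isBounded_adjImage T) (isCompact_weakDual_adjImage T) h)
end
end
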